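/- Suppose Assumption (A) holds. Then for every test function f, the means of f under the interior and boundary measures satisfy |μ_V(f) − μ_W^∂(f)| ≤ C₀C₁·( ∫ (f − μ_V(f))² dμ_V )^{1/2} + C₀C₂·( g_V(f) )^{1/2}. -/

import Mathlib

open MeasureTheory Real

noncomputable section

def Hs (d : ℕ) : Set (EuclideanSpace ℝ (Fin (d + 1))) := {x | 0 < x 0}

def iota (d : ℕ) (y : EuclideanSpace ℝ (Fin d)) : EuclideanSpace ℝ (Fin (d + 1)) :=
  WithLp.toLp 2 (Fin.cons 0 (WithLp.ofLp y) : Fin (d + 1) → ℝ)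

def IsTest (d : ℕ) (f : EuclideanSpace ℝ (Fin (d + 1)) → ℝ) : Prop :=
  ContDiff ℝ 1 f ∧ (∃ C, ∀ x, |f x| ≤ C) ∧ ∃ C, ∀ x, ‖gradient f x‖ ≤ C

def IsTestB (d : ℕ) (g : EuclideanSpace ℝ (Fin d) → ℝ) : Prop :=
  ContDiff ℝ 1 g ∧ (∃ C, ∀ y, |g y| ≤ C) ∧ ∃ C, ∀ y, ‖gradient g y‖ ≤ C

def ZV (d : ℕ) (V : EuclideanSpace ℝ (Fin (d + 1)) → ℝ) : ℝ :=
  ∫ x in Hs d, Real.exp (V x)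

def ZW (d : ℕ) (W : EuclideanSpace ℝ (Fin d) → ℝ) : ℝ :=
  ∫ y, Real.exp (W y)

/-- mean of `φ` under `μ_V`. -/
def muV (d : ℕ) (V : EuclideanSpace ℝ (Fin (d + 1)) → ℝ)
    (φ : EuclideanSpace ℝ (Fin (d + 1)) → ℝ) : ℝ :=
  (ZV d V)⁻¹ * ∫ x in Hs d, φ x * Real.exp (V x)

/-- mean of `ψ` under `ν_W`. -/
def nuW (d : ℕ) (W : EuclideanSpace ℝ (Fin d) → ℝ)
    (ψ : EuclideanSpace ℝ (Fin d) → ℝ) : ℝ :=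
  (ZW d W)⁻¹ * ∫ y, ψ y * Real.exp (W y)

def theta (d : ℕ) (V : EuclideanSpace ℝ (Fin (d + 1)) → ℝ)
    (W : EuclideanSpace ℝ (Fin d) → ℝ) (γ : ℝ) : ℝ :=
  γ * ZW d W / (γ * ZW d W + ZV d V)

/-- mean of `φ` under `μ = θ μ_V + (1-θ) μ_W^∂`. -/
def muM (d : ℕ) (V : EuclideanSpace ℝ (Fin (d + 1)) → ℝ)
    (W : EuclideanSpace ℝ (Fin d) → ℝ) (γ : ℝ)
    (φ : EuclideanSpace ℝ (Fin (d + 1)) → ℝ) : ℝ :=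
  theta d V W γ * muV d V φ + (1 - theta d V W γ) * nuW d W (fun y => φ (iota d y))

def gV (d : ℕ) (V f : EuclideanSpace ℝ (Fin (d + 1)) → ℝ) : ℝ :=
  muV d V (fun x => ‖gradient f x‖ ^ 2)

def gW (d : ℕ) (W : EuclideanSpace ℝ (Fin d) → ℝ)
    (f : EuclideanSpace ℝ (Fin (d + 1)) → ℝ) : ℝ :=
  nuW d W (fun y => ‖gradient (fun z => f (iota d z)) y‖ ^ 2)

def Edir (d : ℕ) (V : EuclideanSpace ℝ (Fin (d + 1)) → ℝ)
    (W : EuclideanSpace ℝ (Fin d) → ℝ) (γ δ : ℝ)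
    (f : EuclideanSpace ℝ (Fin (d + 1)) → ℝ) : ℝ :=
  theta d V W γ * gV d V f + (1 - theta d V W γ) * δ * gW d W f

def supNorm (d : ℕ) (f : EuclideanSpace ℝ (Fin (d + 1)) → ℝ) : ℝ := ⨆ x, |f x|

def lap (d : ℕ) (h : EuclideanSpace ℝ (Fin (d + 1)) → ℝ)
    (x : EuclideanSpace ℝ (Fin (d + 1))) : ℝ :=
  ∑ i : Fin (d + 1),
    fderiv ℝ (fun z => fderiv ℝ h z (EuclideanSpace.single i 1)) x (EuclideanSpace.single i 1)

def LV (d : ℕ) (V h : EuclideanSpace ℝ (Fin (d + 1)) → ℝ)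
    (x : EuclideanSpace ℝ (Fin (d + 1))) : ℝ :=
  lap d h x + (inner ℝ (gradient V x) (gradient h x) : ℝ)

def M0 (d : ℕ) (V : EuclideanSpace ℝ (Fin (d + 1)) → ℝ)
    (W : EuclideanSpace ℝ (Fin d) → ℝ) : ℝ :=
  ⨆ y, max (W y - V (iota d y)) 0

def C0 (d : ℕ) (V : EuclideanSpace ℝ (Fin (d + 1)) → ℝ)
    (W : EuclideanSpace ℝ (Fin d) → ℝ) : ℝ :=
  (ZV d V / ZW d W) * Real.exp (M0 d V W)

def C1 (d : ℕ) (V h : EuclideanSpace ℝ (Fin (d + 1)) → ℝ) : ℝ :=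
  Real.sqrt (muV d V (fun x => (max (-(LV d V h x)) 0) ^ 2))

def C2 (d : ℕ) (V h : EuclideanSpace ℝ (Fin (d + 1)) → ℝ) : ℝ :=
  Real.sqrt (muV d V (fun x => ‖gradient h x‖ ^ 2))

/-- Assumption (A). -/
def AssumptionA (d : ℕ) (V : EuclideanSpace ℝ (Fin (d + 1)) → ℝ)
    (W : EuclideanSpace ℝ (Fin d) → ℝ) (h : EuclideanSpace ℝ (Fin (d + 1)) → ℝ) : Prop :=
  ContDiff ℝ 2 h ∧
  (∀ y, fderiv ℝ h (iota d y) (EuclideanSpace.single 0 1) = 1) ∧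
  BddAbove (Set.range fun y => max (W y - V (iota d y)) 0) ∧
  IntegrableOn (fun x => (max (-(LV d V h x)) 0) ^ 2 * Real.exp (V x)) (Hs d) ∧
  IntegrableOn (fun x => ‖gradient h x‖ ^ 2 * Real.exp (V x)) (Hs d) ∧
  ∀ φ : EuclideanSpace ℝ (Fin (d + 1)) → ℝ, (∃ K, LipschitzWith K φ) →
    (∃ C, ∀ x, |φ x| ≤ C) →
    (∫ y, φ (iota d y) * Real.exp (V (iota d y))) =
      - ∫ x in Hs d,
          (φ x * LV d V h x + (inner ℝ (gradient φ x) (gradient h x) : ℝ)) * Real.exp (V x)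

/-- Assumption (B) with given sup constants. -/
def AssumptionB (d : ℕ) (V : EuclideanSpace ℝ (Fin (d + 1)) → ℝ)
    (W : EuclideanSpace ℝ (Fin d) → ℝ) (h : EuclideanSpace ℝ (Fin (d + 1)) → ℝ)
    (Cb1 Cb2 : ℝ) : Prop :=
  ContDiff ℝ 2 h ∧
  (∀ y, fderiv ℝ h (iota d y) (EuclideanSpace.single 0 1) = 1) ∧
  BddAbove (Set.range fun y => max (W y - V (iota d y)) 0) ∧
  IsLUB ((fun x => max (-(LV d V h x)) 0) '' {x : EuclideanSpace ℝ (Fin (d + 1)) | 0 ≤ x 0}) Cb1 ∧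
  IsLUB ((fun x => ‖gradient h x‖) '' {x : EuclideanSpace ℝ (Fin (d + 1)) | 0 ≤ x 0}) Cb2 ∧
  ∀ φ : EuclideanSpace ℝ (Fin (d + 1)) → ℝ, (∃ K, LipschitzWith K φ) →
    (∃ C, ∀ x, |φ x| ≤ C) →
    (∫ y, φ (iota d y) * Real.exp (V (iota d y))) =
      - ∫ x in Hs d,
          (φ x * LV d V h x + (inner ℝ (gradient φ x) (gradient h x) : ℝ)) * Real.exp (V x)

/-!
Write `m = μ_V(f)` and `ψ = f - m`. Since `e^W ≤ e^{M₀} e^V` on `∂H`,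
`Z_W ν_W(ψ ∘ ι) ≤ e^{M₀} ∫ ψ⁺(0, y) e^{V(0, y)} dy`. The Gauss–Green identity applied to
the nonnegative Lipschitz function `ψ⁺` turns this boundary integral into
`-∫_H (ψ⁺ L_V h + ⟨∇ψ⁺, ∇h⟩) e^V ≤ ∫_H (|ψ| (L_V h)⁻ + |∇ψ| |∇h|) e^V`, and Cauchy–Schwarz in
`L²(e^V dλ|_H)` bounds the right side by `Z_V (C₁ ‖ψ‖_{L²(μ_V)} + C₂ g_V(f)^{1/2})`.
Running the same argument for `-ψ` gives the other sign.
Comparing `e^W` with `e^V` on `∂H` needs `e^{V ∘ ι}` to be integrable; this also follows from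
the Gauss–Green identity, tested against Lipschitz cutoffs, by monotone convergence.
-/

section Gradient

variable {F : Type*} [NormedAddCommGroup F] [InnerProductSpace ℝ F] [CompleteSpace F]

lemma norm_gradient (f : F → ℝ) (x : F) : ‖gradient f x‖ = ‖fderiv ℝ f x‖ :=
  (InnerProductSpace.toDual ℝ F).symm.norm_map _

lemma ContDiff.continuous_gradient {f : F → ℝ} (hf : ContDiff ℝ 1 f) :
    Continuous (gradient f) :=
  (InnerProductSpace.toDual ℝ F).symm.continuous.comp (hf.continuous_fderiv one_ne_zero)

lemma measurable_gradient [MeasurableSpace F] [BorelSpace F] (f : F → ℝ) :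
    Measurable (gradient f) :=
  (InnerProductSpace.toDual ℝ F).symm.continuous.measurable.comp (measurable_fderiv ℝ f)

lemma gradient_sub_const (f : F → ℝ) (c : ℝ) : gradient (fun x => f x - c) = gradient f := by
  ext1 x
  simp only [gradient, fderiv_sub_const]

lemma gradient_neg (f : F → ℝ) : gradient (fun x => -f x) = -gradient f := by
  ext1 x
  simp only [gradient, fderiv_fun_neg, map_neg, Pi.neg_apply]

lemma norm_gradient_le_of_lipschitzWith {f : F → ℝ} {K : NNReal} (hf : LipschitzWith K f)
    (x : F) : ‖gradient f x‖ ≤ K := by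
  rw [norm_gradient]
  exact norm_fderiv_le_of_lipschitz ℝ hf

lemma lipschitzWith_of_norm_gradient_le {f : F → ℝ} (hf : Differentiable ℝ f) {C : ℝ}
    (hC : ∀ x, ‖gradient f x‖ ≤ C) : LipschitzWith C.toNNReal f := by
  refine lipschitzWith_of_nnnorm_fderiv_le hf fun x => ?_
  rw [← NNReal.coe_le_coe, coe_nnnorm, ← norm_gradient, Real.coe_toNNReal']
  exact (hC x).trans (le_max_left _ _)

/-- At a zero of `f` the function `max f 0` has a local minimum, so its gradient vanishes
if it exists. -/
lemma norm_gradient_max_zero_le {f : F → ℝ} (hf : Differentiable ℝ f) (x : F) :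
    ‖gradient (fun y => max (f y) 0) x‖ ≤ ‖gradient f x‖ := by
  rcases lt_trichotomy (f x) 0 with hneg | hzero | hpos
  · have hloc : (fun y => max (f y) 0) =ᶠ[nhds x] fun _ => (0 : ℝ) := by
      filter_upwards [hf.continuous.continuousAt.eventually_lt continuousAt_const hneg]
        with y hy using max_eq_right hy.le
    simp [hloc.gradient_eq, gradient_fun_const]
  · by_cases hd : DifferentiableAt ℝ (fun y => max (f y) 0) x
    · have hmin : IsLocalMin (fun y => max (f y) 0) x :=
        Filter.Eventually.of_forall fun y => by simp [hzero]
      simp [norm_gradient, hmin.fderiv_eq_zero]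
    · simp [gradient_eq_zero_of_not_differentiableAt hd]
  · have hloc : (fun y => max (f y) 0) =ᶠ[nhds x] f := by
      filter_upwards [continuousAt_const.eventually_lt hf.continuous.continuousAt hpos]
        with y hy using max_eq_left hy.le
    rw [hloc.gradient_eq]

end Gradient

section Cutoff

variable {E : Type*} [NormedAddCommGroup E]

def cutoff (n : ℕ) (x : E) : ℝ := max (min ((n : ℝ) + 1 - ‖x‖) 1) 0

lemma cutoff_nonneg (n : ℕ) (x : E) : 0 ≤ cutoff n x := le_max_right _ _

lemma cutoff_le_one (n : ℕ) (x : E) : cutoff n x ≤ 1 :=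
  max_le (min_le_right _ _) zero_le_one

lemma cutoff_eq_one {n : ℕ} {x : E} (hx : ‖x‖ ≤ n) : cutoff n x = 1 := by
  rw [cutoff, min_eq_right (by linarith), max_eq_left zero_le_one]

lemma cutoff_eq_zero {n : ℕ} {x : E} (hx : (n : ℝ) + 1 ≤ ‖x‖) : cutoff n x = 0 :=
  max_eq_right ((min_le_left _ _).trans (by linarith))

lemma monotone_cutoff (x : E) : Monotone fun n : ℕ => cutoff n x :=
  monotone_nat_of_le_succ fun n =>
    max_le_max_right _ (min_le_min_right _ (by push_cast; linarith))

lemma lipschitzWith_cutoff (n : ℕ) : LipschitzWith 1 (cutoff (E := E) n) :=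
  ((LipschitzWith.const ((n : ℝ) + 1)).sub lipschitzWith_one_norm |>.min_const 1).max_const 0
    |>.weaken (by norm_num)

lemma hasCompactSupport_cutoff [ProperSpace E] (n : ℕ) : HasCompactSupport (cutoff (E := E) n) :=
  HasCompactSupport.intro (isCompact_closedBall 0 ((n : ℝ) + 1)) fun x hx =>
    cutoff_eq_zero (le_of_lt (by simpa using hx))

lemma integrable_of_integral_cutoff_mul_le [MeasurableSpace E] [BorelSpace E] [ProperSpace E]
    {μ : Measure E} [IsFiniteMeasureOnCompacts μ] {g : E → ℝ} (hg : Continuous g)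
    (hg0 : ∀ x, 0 ≤ g x) {B : ℝ} (hB : ∀ n : ℕ, ∫ x, cutoff n x * g x ∂μ ≤ B) :
    Integrable g μ := by
  have hcont (n : ℕ) : Continuous fun x => cutoff n x * g x :=
    (lipschitzWith_cutoff n).continuous.mul hg
  have hint (n : ℕ) : Integrable (fun x => cutoff n x * g x) μ :=
    (hcont n).integrable_of_hasCompactSupport ((hasCompactSupport_cutoff n).mul_right)
  have hsup (x : E) : ⨆ n : ℕ, ENNReal.ofReal (cutoff n x * g x) = ENNReal.ofReal (g x) := by
    refine le_antisymm (iSup_le fun n => ENNReal.ofReal_le_ofReal ?_) ?_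
    · exact mul_le_of_le_one_left (hg0 x) (cutoff_le_one n x)
    · refine le_iSup_of_le ⌈‖x‖⌉₊ (le_of_eq ?_)
      rw [cutoff_eq_one (Nat.le_ceil _), one_mul]
  have hlint : ∫⁻ x, ENNReal.ofReal (g x) ∂μ ≤ ENNReal.ofReal B := by
    simp_rw [← hsup]
    rw [lintegral_iSup (fun n => (hcont n).measurable.ennreal_ofReal)
      fun m n hmn x => ENNReal.ofReal_le_ofReal
        (mul_le_mul_of_nonneg_right (monotone_cutoff x hmn) (hg0 x))]
    refine iSup_le fun n => ?_
    rw [← ofReal_integral_eq_lintegral_ofReal (hint n)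
      (Filter.Eventually.of_forall fun x => mul_nonneg (cutoff_nonneg n x) (hg0 x))]
    exact ENNReal.ofReal_le_ofReal (hB n)
  refine ⟨hg.aestronglyMeasurable, ?_⟩
  rw [hasFiniteIntegral_iff_ofReal (Filter.Eventually.of_forall hg0)]
  exact hlint.trans_lt ENNReal.ofReal_lt_top

end Cutoff

lemma abs_max_zero_le {a C : ℝ} (h : |a| ≤ C) : |max a 0| ≤ C := by
  rw [abs_of_nonneg (le_max_right _ _)]
  exact max_le ((le_abs_self _).trans h) ((abs_nonneg _).trans h)

section WeightedIntegrals

variable {α : Type*} [MeasurableSpace α] {μ : Measure α}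

/-- `|u v| w ≤ (u² w + v² w) / 2`. -/
lemma integrable_mul_mul_of_integrable_sq_mul {u v w : α → ℝ}
    (hm : AEStronglyMeasurable (fun x => u x * v x * w x) μ) (hw : ∀ x, 0 ≤ w x)
    (hu : Integrable (fun x => u x ^ 2 * w x) μ) (hv : Integrable (fun x => v x ^ 2 * w x) μ) :
    Integrable (fun x => u x * v x * w x) μ := by
  refine ((hu.add hv).div_const 2).mono' hm (Filter.Eventually.of_forall fun x => ?_)
  rw [Pi.add_apply, Real.norm_eq_abs, abs_le]
  constructor <;> nlinarith [mul_nonneg (sq_nonneg (u x + v x)) (hw x),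
    mul_nonneg (sq_nonneg (u x - v x)) (hw x)]

lemma integrable_mul_of_integrable_sq_mul {u w : α → ℝ}
    (hm : AEStronglyMeasurable (fun x => u x * w x) μ) (hw : ∀ x, 0 ≤ w x)
    (hu : Integrable (fun x => u x ^ 2 * w x) μ) (hw' : Integrable w μ) :
    Integrable (fun x => u x * w x) μ := by
  simpa using integrable_mul_mul_of_integrable_sq_mul (v := fun _ => 1) (by simpa using hm) hw hu
    (by simpa using hw')

lemma integral_mul_le_sqrt_mul_sqrt {u v : α → ℝ} (hu : AEStronglyMeasurable u μ)
    (hv : AEStronglyMeasurable v μ) (hu0 : ∀ x, 0 ≤ u x) (hv0 : ∀ x, 0 ≤ v x)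
    (hu2 : Integrable (fun x => u x ^ 2) μ) (hv2 : Integrable (fun x => v x ^ 2) μ) :
    ∫ x, u x * v x ∂μ ≤ √(∫ x, u x ^ 2 ∂μ) * √(∫ x, v x ^ 2 ∂μ) := by
  have hL2 {f : α → ℝ} (hf : AEStronglyMeasurable f μ) (hf2 : Integrable (fun x => f x ^ 2) μ) :
      MemLp f (ENNReal.ofReal 2) μ := by
    rw [ENNReal.ofReal_ofNat]
    exact (memLp_two_iff_integrable_sq hf).2 hf2
  have := integral_mul_le_Lp_mul_Lq_of_nonneg Real.HolderConjugate.two_two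
    (Filter.Eventually.of_forall hu0) (Filter.Eventually.of_forall hv0) (hL2 hu hu2) (hL2 hv hv2)
  simpa only [Real.sqrt_eq_rpow, one_div, Real.rpow_two] using this

/-- Cauchy–Schwarz for the weight `w`, applied to `u √w` and `v √w`. -/
lemma integral_mul_mul_le_sqrt_mul_sqrt {u v w : α → ℝ} (hu : AEStronglyMeasurable u μ)
    (hv : AEStronglyMeasurable v μ) (hw : AEStronglyMeasurable w μ)
    (hu0 : ∀ x, 0 ≤ u x) (hv0 : ∀ x, 0 ≤ v x) (hw0 : ∀ x, 0 ≤ w x)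
    (hu2 : Integrable (fun x => u x ^ 2 * w x) μ) (hv2 : Integrable (fun x => v x ^ 2 * w x) μ) :
    ∫ x, u x * v x * w x ∂μ ≤ √(∫ x, u x ^ 2 * w x ∂μ) * √(∫ x, v x ^ 2 * w x ∂μ) := by
  have hsq (f : α → ℝ) (x : α) : (f x * √(w x)) ^ 2 = f x ^ 2 * w x := by
    rw [mul_pow, Real.sq_sqrt (hw0 x)]
  have hprod (x : α) : u x * √(w x) * (v x * √(w x)) = u x * v x * w x := by
    rw [mul_mul_mul_comm, Real.mul_self_sqrt (hw0 x)]
  have hsqrt := Real.continuous_sqrt.comp_aestronglyMeasurable hw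
  simpa only [Pi.mul_apply, hsq, hprod] using
    integral_mul_le_sqrt_mul_sqrt (hu.mul hsqrt) (hv.mul hsqrt)
    (fun x => mul_nonneg (hu0 x) (Real.sqrt_nonneg _))
    (fun x => mul_nonneg (hv0 x) (Real.sqrt_nonneg _))
    (by simpa only [Pi.mul_apply, hsq] using hu2) (by simpa only [Pi.mul_apply, hsq] using hv2)

lemma integral_mul_exp_le_exp_mul_integral_max_mul_exp {φ w v : α → ℝ} {M C : ℝ}
    (hφ : AEStronglyMeasurable φ μ) (hφC : ∀ x, |φ x| ≤ C)
    (hw : Integrable (fun x => Real.exp (w x)) μ) (hv : Integrable (fun x => Real.exp (v x)) μ)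
    (hwv : ∀ x, w x ≤ M + v x) :
    ∫ x, φ x * Real.exp (w x) ∂μ ≤ Real.exp M * ∫ x, max (φ x) 0 * Real.exp (v x) ∂μ := by
  have hφ' : AEStronglyMeasurable (fun x => max (φ x) 0) μ := hφ.sup aestronglyMeasurable_const
  have hφC' (x : α) : ‖max (φ x) 0‖ ≤ C := abs_max_zero_le (hφC x)
  rw [← integral_const_mul]
  calc ∫ x, φ x * Real.exp (w x) ∂μ ≤ ∫ x, max (φ x) 0 * Real.exp (w x) ∂μ :=
        integral_mono (hw.bdd_mul hφ (Filter.Eventually.of_forall hφC))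
          (hw.bdd_mul hφ' (Filter.Eventually.of_forall hφC'))
          fun x => mul_le_mul_of_nonneg_right (le_max_left _ _) (Real.exp_pos _).le
    _ ≤ ∫ x, Real.exp M * (max (φ x) 0 * Real.exp (v x)) ∂μ := by
        refine integral_mono (hw.bdd_mul hφ' (Filter.Eventually.of_forall hφC'))
          ((hv.bdd_mul hφ' (Filter.Eventually.of_forall hφC')).const_mul _) fun x => ?_
        rw [mul_left_comm, ← Real.exp_add]
        exact mul_le_mul_of_nonneg_left (Real.exp_le_exp.2 (hwv x)) (le_max_right _ _)

end WeightedIntegrals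

section HalfSpace

variable {d : ℕ}

lemma continuous_iota : Continuous (iota d) := by
  unfold iota
  fun_prop

lemma norm_iota (y : EuclideanSpace ℝ (Fin d)) : ‖iota d y‖ = ‖y‖ := by
  simp [EuclideanSpace.norm_eq, iota, Fin.sum_univ_succ]

lemma cutoff_iota (n : ℕ) (y : EuclideanSpace ℝ (Fin d)) : cutoff n (iota d y) = cutoff n y := by
  rw [cutoff, cutoff, norm_iota]

lemma isOpen_Hs : IsOpen (Hs d) :=
  isOpen_lt continuous_const (EuclideanSpace.proj (0 : Fin (d + 1))).continuous

lemma ZV_pos {V : EuclideanSpace ℝ (Fin (d + 1)) → ℝ}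
    (hZV : IntegrableOn (fun x => Real.exp (V x)) (Hs d)) : 0 < ZV d V := by
  have hHs : volume (Hs d) ≠ 0 :=
    isOpen_Hs.measure_ne_zero volume ⟨EuclideanSpace.single 0 1, by simp [Hs]⟩
  have : NeZero (volume.restrict (Hs d)) := ⟨by simpa using hHs⟩
  exact integral_exp_pos hZV

lemma ZW_pos {W : EuclideanSpace ℝ (Fin d) → ℝ} (hZW : Integrable fun y => Real.exp (W y)) :
    0 < ZW d W :=
  integral_exp_pos hZW

end HalfSpace

lemma continuous_lap {d : ℕ} {h : EuclideanSpace ℝ (Fin (d + 1)) → ℝ} (hh : ContDiff ℝ 2 h) :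
    Continuous (lap d h) := by
  refine continuous_finsetSum _ fun i _ => ?_
  have hdir : ContDiff ℝ 1 fun z => fderiv ℝ h z (EuclideanSpace.single i 1) :=
    (hh.fderiv_right (m := 1) (by norm_num)).clm_apply contDiff_const
  exact (hdir.continuous_fderiv one_ne_zero).clm_apply continuous_const

lemma continuous_LV {d : ℕ} {V h : EuclideanSpace ℝ (Fin (d + 1)) → ℝ} (hV : ContDiff ℝ 1 V)
    (hh : ContDiff ℝ 2 h) : Continuous (LV d V h) :=
  (continuous_lap hh).add (hV.continuous_gradient.inner (hh.of_le one_le_two).continuous_gradient)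

/-- The last conjunct of `AssumptionA`. -/
def GaussGreen (d : ℕ) (V h : EuclideanSpace ℝ (Fin (d + 1)) → ℝ) : Prop :=
  ∀ φ : EuclideanSpace ℝ (Fin (d + 1)) → ℝ, (∃ K, LipschitzWith K φ) →
    (∃ C, ∀ x, |φ x| ≤ C) →
    (∫ y, φ (iota d y) * Real.exp (V (iota d y))) =
      - ∫ x in Hs d,
          (φ x * LV d V h x + (inner ℝ (gradient φ x) (gradient h x) : ℝ)) * Real.exp (V x)

section GaussGreen

variable {d : ℕ} {V h : EuclideanSpace ℝ (Fin (d + 1)) → ℝ}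

lemma boundary_integral_le (hGG : GaussGreen d V h) {φ a G : EuclideanSpace ℝ (Fin (d + 1)) → ℝ}
    {K : NNReal} (hφK : LipschitzWith K φ) {C : ℝ} (hφC : ∀ x, |φ x| ≤ C) (hφ0 : ∀ x, 0 ≤ φ x)
    (hφa : ∀ x, φ x ≤ a x) (hφG : ∀ x, ‖gradient φ x‖ ≤ G x)
    (ha : IntegrableOn (fun x => a x * max (-LV d V h x) 0 * Real.exp (V x)) (Hs d))
    (hG : IntegrableOn (fun x => G x * ‖gradient h x‖ * Real.exp (V x)) (Hs d)) :
    ∫ y, φ (iota d y) * Real.exp (V (iota d y)) ≤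
      (∫ x in Hs d, a x * max (-LV d V h x) 0 * Real.exp (V x)) +
        ∫ x in Hs d, G x * ‖gradient h x‖ * Real.exp (V x) := by
  rw [hGG φ ⟨K, hφK⟩ ⟨C, hφC⟩]
  by_cases hint : IntegrableOn
      (fun x => (φ x * LV d V h x + inner ℝ (gradient φ x) (gradient h x)) * Real.exp (V x))
      (Hs d)
  · rw [← integral_add ha hG, ← integral_neg]
    refine integral_mono hint.neg (ha.add hG) fun x => ?_
    have hL : φ x * -LV d V h x ≤ a x * max (-LV d V h x) 0 :=
      (mul_le_mul_of_nonneg_left (le_max_left _ _) (hφ0 x)).trans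
        (mul_le_mul_of_nonneg_right (hφa x) (le_max_right _ _))
    have hinner : -inner ℝ (gradient φ x) (gradient h x) ≤ G x * ‖gradient h x‖ :=
      (neg_le_abs _).trans ((abs_real_inner_le_norm _ _).trans
        (mul_le_mul_of_nonneg_right (hφG x) (norm_nonneg _)))
    linear_combination mul_le_mul_of_nonneg_right (add_le_add hL hinner) (Real.exp_pos (V x)).le
  · rw [integral_undef hint, neg_zero]
    exact add_nonneg (integral_nonneg fun x => mul_nonneg (mul_nonneg ((hφ0 x).trans (hφa x))
      (le_max_right _ _)) (Real.exp_pos _).le) (integral_nonneg fun x => mul_nonneg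
        (mul_nonneg ((norm_nonneg _).trans (hφG x)) (norm_nonneg _)) (Real.exp_pos _).le)

variable (hV : ContDiff ℝ 1 V) (hh : ContDiff ℝ 2 h)
  (hZV : IntegrableOn (fun x => Real.exp (V x)) (Hs d))
  (hL : IntegrableOn (fun x => (max (-LV d V h x) 0) ^ 2 * Real.exp (V x)) (Hs d))
  (hGh : IntegrableOn (fun x => ‖gradient h x‖ ^ 2 * Real.exp (V x)) (Hs d))
  (hGG : GaussGreen d V h)
include hV hh hZV hL hGh hGG

lemma integrable_exp_comp_iota : Integrable fun y => Real.exp (V (iota d y)) := by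
  have hexp : Continuous fun x => Real.exp (V x) := Real.continuous_exp.comp hV.continuous
  have hL1 : IntegrableOn (fun x => 1 * max (-LV d V h x) 0 * Real.exp (V x)) (Hs d) := by
    simp only [one_mul]
    exact integrable_mul_of_integrable_sq_mul
      (((continuous_LV hV hh).neg.max continuous_const).mul hexp).aestronglyMeasurable
      (fun x => (Real.exp_pos _).le) hL hZV
  have hG1 : IntegrableOn (fun x => 1 * ‖gradient h x‖ * Real.exp (V x)) (Hs d) := by
    simp only [one_mul]
    exact integrable_mul_of_integrable_sq_mul
      ((hh.of_le one_le_two).continuous_gradient.norm.mul hexp).aestronglyMeasurable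
      (fun x => (Real.exp_pos _).le) hGh hZV
  have hgrad (n : ℕ) (x : EuclideanSpace ℝ (Fin (d + 1))) : ‖gradient (cutoff n) x‖ ≤ 1 := by
    simpa using norm_gradient_le_of_lipschitzWith (lipschitzWith_cutoff n) x
  have hbound (n : ℕ) := boundary_integral_le hGG (a := fun _ => 1) (G := fun _ => 1)
    (lipschitzWith_cutoff n) (C := 1)
    (fun x => (abs_of_nonneg (cutoff_nonneg n x)).trans_le (cutoff_le_one n x)) (cutoff_nonneg n)
    (cutoff_le_one n) (hgrad n) hL1 hG1
  simp only [cutoff_iota] at hbound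
  exact integrable_of_integral_cutoff_mul_le (hexp.comp continuous_iota)
    (fun y => (Real.exp_pos _).le) hbound

lemma integral_max_comp_iota_mul_exp_le {ψ : EuclideanSpace ℝ (Fin (d + 1)) → ℝ}
    (hψ : IsTest d ψ) :
    ∫ y, max (ψ (iota d y)) 0 * Real.exp (V (iota d y)) ≤
      ZV d V * (C1 d V h * √(muV d V fun x => ψ x ^ 2) + C2 d V h * √(gV d V ψ)) := by
  obtain ⟨hψ1, ⟨Cb, hCb⟩, ⟨Cg, hCg⟩⟩ := hψ
  have hψd : Differentiable ℝ ψ := hψ1.differentiable one_ne_zero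
  have hexp : Continuous fun x => Real.exp (V x) := Real.continuous_exp.comp hV.continuous
  have hLc : Continuous fun x => max (-LV d V h x) 0 :=
    (continuous_LV hV hh).neg.max continuous_const
  have hgh : Continuous fun x => ‖gradient h x‖ := (hh.of_le one_le_two).continuous_gradient.norm
  have hgψ : Measurable fun x => ‖gradient ψ x‖ := (measurable_gradient ψ).norm
  have hψ2 : IntegrableOn (fun x => |ψ x| ^ 2 * Real.exp (V x)) (Hs d) :=
    hZV.bdd_mul (c := Cb ^ 2) (hψ1.continuous.abs.pow 2).aestronglyMeasurable
      (Filter.Eventually.of_forall fun x => by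
        simpa using pow_le_pow_left₀ (abs_nonneg _) (hCb x) 2)
  have hgψ2 : IntegrableOn (fun x => ‖gradient ψ x‖ ^ 2 * Real.exp (V x)) (Hs d) :=
    hZV.bdd_mul (c := Cg ^ 2) (hgψ.pow_const 2).aestronglyMeasurable
      (Filter.Eventually.of_forall fun x => by
        simpa using pow_le_pow_left₀ (norm_nonneg _) (hCg x) 2)
  have hZV0 := ZV_pos hZV
  have hsqrt (φ χ : EuclideanSpace ℝ (Fin (d + 1)) → ℝ) :
      √(∫ x in Hs d, φ x * Real.exp (V x)) * √(∫ x in Hs d, χ x * Real.exp (V x)) =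
        ZV d V * (√(muV d V φ) * √(muV d V χ)) := by
    rw [muV, muV, Real.sqrt_mul (inv_nonneg.2 hZV0.le), Real.sqrt_mul (inv_nonneg.2 hZV0.le),
      mul_mul_mul_comm, ← Real.sqrt_mul (inv_nonneg.2 hZV0.le), ← mul_inv, Real.sqrt_inv,
      Real.sqrt_mul_self hZV0.le, mul_inv_cancel_left₀ hZV0.ne']
  calc ∫ y, max (ψ (iota d y)) 0 * Real.exp (V (iota d y))
      ≤ (∫ x in Hs d, |ψ x| * max (-LV d V h x) 0 * Real.exp (V x)) +
          ∫ x in Hs d, ‖gradient ψ x‖ * ‖gradient h x‖ * Real.exp (V x) :=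
        boundary_integral_le hGG ((lipschitzWith_of_norm_gradient_le hψd hCg).max_const 0)
          (fun x => abs_max_zero_le (hCb x))
          (fun x => le_max_right _ _) (fun x => max_le (le_abs_self _) (abs_nonneg _))
          (norm_gradient_max_zero_le hψd)
          (integrable_mul_mul_of_integrable_sq_mul
            ((hψ1.continuous.abs.mul hLc).mul hexp).aestronglyMeasurable
            (fun x => (Real.exp_pos _).le) hψ2 hL)
          (integrable_mul_mul_of_integrable_sq_mul
            ((hgψ.mul hgh.measurable).mul hexp.measurable).aestronglyMeasurable
            (fun x => (Real.exp_pos _).le) hgψ2 hGh)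
    _ ≤ √(∫ x in Hs d, |ψ x| ^ 2 * Real.exp (V x)) *
            √(∫ x in Hs d, max (-LV d V h x) 0 ^ 2 * Real.exp (V x)) +
          √(∫ x in Hs d, ‖gradient ψ x‖ ^ 2 * Real.exp (V x)) *
            √(∫ x in Hs d, ‖gradient h x‖ ^ 2 * Real.exp (V x)) :=
        add_le_add
          (integral_mul_mul_le_sqrt_mul_sqrt hψ1.continuous.abs.aestronglyMeasurable
            hLc.aestronglyMeasurable hexp.aestronglyMeasurable (fun x => abs_nonneg _)
            (fun x => le_max_right _ _) (fun x => (Real.exp_pos _).le) hψ2 hL)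
          (integral_mul_mul_le_sqrt_mul_sqrt hgψ.aestronglyMeasurable
            hgh.aestronglyMeasurable hexp.aestronglyMeasurable (fun x => norm_nonneg _)
            (fun x => norm_nonneg _) (fun x => (Real.exp_pos _).le) hgψ2 hGh)
    _ = ZV d V * (C1 d V h * √(muV d V fun x => ψ x ^ 2) + C2 d V h * √(gV d V ψ)) := by
      simp only [sq_abs, hsqrt, C1, C2, gV]
      ring

end GaussGreen

section Means

variable {d : ℕ}

lemma IsTest.sub_const {f : EuclideanSpace ℝ (Fin (d + 1)) → ℝ} (hf : IsTest d f) (c : ℝ) :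
    IsTest d fun x => f x - c := by
  obtain ⟨hf1, ⟨Cb, hCb⟩, ⟨Cg, hCg⟩⟩ := hf
  exact ⟨hf1.sub contDiff_const, ⟨Cb + |c|, fun x => (abs_sub _ _).trans (by linarith [hCb x])⟩,
    ⟨Cg, by simpa only [gradient_sub_const] using hCg⟩⟩

lemma IsTest.neg {f : EuclideanSpace ℝ (Fin (d + 1)) → ℝ} (hf : IsTest d f) :
    IsTest d fun x => -f x := by
  obtain ⟨hf1, ⟨Cb, hCb⟩, ⟨Cg, hCg⟩⟩ := hf
  exact ⟨hf1.neg, ⟨Cb, by simpa only [abs_neg] using hCb⟩,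
    ⟨Cg, by simpa only [gradient_neg, Pi.neg_apply, norm_neg] using hCg⟩⟩

lemma gV_sub_const (V f : EuclideanSpace ℝ (Fin (d + 1)) → ℝ) (c : ℝ) :
    gV d V (fun x => f x - c) = gV d V f := by
  simp only [gV, gradient_sub_const]

lemma gV_neg (V f : EuclideanSpace ℝ (Fin (d + 1)) → ℝ) : gV d V (fun x => -f x) = gV d V f := by
  simp only [gV, gradient_neg, Pi.neg_apply, norm_neg]

lemma nuW_neg (W g : EuclideanSpace ℝ (Fin d) → ℝ) :
    nuW d W (fun y => -g y) = -nuW d W g := by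
  simp only [nuW, neg_mul, integral_neg, mul_neg]

lemma nuW_comp_iota_sub_const {W : EuclideanSpace ℝ (Fin d) → ℝ}
    (hZW : Integrable fun y => Real.exp (W y)) {f : EuclideanSpace ℝ (Fin (d + 1)) → ℝ}
    (hf : IsTest d f) (c : ℝ) :
    nuW d W (fun y => f (iota d y) - c) = nuW d W (fun y => f (iota d y)) - c := by
  obtain ⟨hf1, ⟨Cb, hCb⟩, -⟩ := hf
  have hint : Integrable fun y => f (iota d y) * Real.exp (W y) :=
    hZW.bdd_mul (hf1.continuous.comp continuous_iota).aestronglyMeasurable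
      (Filter.Eventually.of_forall fun y => hCb _)
  simp only [nuW, sub_mul, integral_sub hint (hZW.const_mul c), integral_const_mul]
  rw [mul_sub, ← ZW, mul_left_comm, inv_mul_cancel₀ (ZW_pos hZW).ne', mul_one]

lemma le_M0_add {V : EuclideanSpace ℝ (Fin (d + 1)) → ℝ} {W : EuclideanSpace ℝ (Fin d) → ℝ}
    (hbdd : BddAbove (Set.range fun y => max (W y - V (iota d y)) 0))
    (y : EuclideanSpace ℝ (Fin d)) :
    W y ≤ M0 d V W + V (iota d y) := by
  have hsup : max (W y - V (iota d y)) 0 ≤ M0 d V W := le_ciSup hbdd y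
  linarith [le_max_left (W y - V (iota d y)) 0]

end Means

lemma nuW_comp_iota_le {d : ℕ} {V h : EuclideanSpace ℝ (Fin (d + 1)) → ℝ}
    {W : EuclideanSpace ℝ (Fin d) → ℝ} (hV : ContDiff ℝ 1 V) (hh : ContDiff ℝ 2 h)
    (hZV : IntegrableOn (fun x => Real.exp (V x)) (Hs d))
    (hZW : Integrable fun y => Real.exp (W y))
    (hL : IntegrableOn (fun x => (max (-LV d V h x) 0) ^ 2 * Real.exp (V x)) (Hs d))
    (hGh : IntegrableOn (fun x => ‖gradient h x‖ ^ 2 * Real.exp (V x)) (Hs d))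
    (hbdd : BddAbove (Set.range fun y => max (W y - V (iota d y)) 0)) (hGG : GaussGreen d V h)
    {ψ : EuclideanSpace ℝ (Fin (d + 1)) → ℝ} (hψ : IsTest d ψ) :
    nuW d W (fun y => ψ (iota d y)) ≤
      C0 d V W * (C1 d V h * √(muV d V fun x => ψ x ^ 2) + C2 d V h * √(gV d V ψ)) := by
  obtain ⟨Cb, hCb⟩ := hψ.2.1
  have hZW0 : 0 ≤ ZW d W := (ZW_pos hZW).le
  calc nuW d W (fun y => ψ (iota d y))
      ≤ (ZW d W)⁻¹ *
          (Real.exp (M0 d V W) * ∫ y, max (ψ (iota d y)) 0 * Real.exp (V (iota d y))) := by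
        unfold nuW
        gcongr
        exact integral_mul_exp_le_exp_mul_integral_max_mul_exp
          (hψ.1.continuous.comp continuous_iota).aestronglyMeasurable (fun y => hCb _) hZW
          (integrable_exp_comp_iota hV hh hZV hL hGh hGG) (le_M0_add hbdd)
    _ ≤ (ZW d W)⁻¹ * (Real.exp (M0 d V W) *
          (ZV d V * (C1 d V h * √(muV d V fun x => ψ x ^ 2) + C2 d V h * √(gV d V ψ)))) := by
        gcongr
        exact integral_max_comp_iota_mul_exp_le hV hh hZV hL hGh hGG hψ
    _ = C0 d V W * (C1 d V h * √(muV d V fun x => ψ x ^ 2) + C2 d V h * √(gV d V ψ)) := by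
        rw [C0]
        ring

theorem sticky_mean_comparison_general
    (d : ℕ)
    (V : EuclideanSpace ℝ (Fin (d + 1)) → ℝ) (W : EuclideanSpace ℝ (Fin d) → ℝ)
    (hV : ContDiff ℝ 1 V)
    (hZV : IntegrableOn (fun x => Real.exp (V x)) (Hs d))
    (hZW : Integrable fun y => Real.exp (W y))
    (h : EuclideanSpace ℝ (Fin (d + 1)) → ℝ) (hA : AssumptionA d V W h) :
    ∀ f, IsTest d f →
      |muV d V f - nuW d W (fun y => f (iota d y))| ≤
        C0 d V W * C1 d V h * Real.sqrt (muV d V (fun x => (f x - muV d V f) ^ 2))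
          + C0 d V W * C2 d V h * Real.sqrt (gV d V f) := by
  obtain ⟨hh, -, hbdd, hL, hGh, hGG⟩ := hA
  intro f hf
  set m := muV d V f
  have upper := nuW_comp_iota_le hV hh hZV hZW hL hGh hbdd hGG (hf.sub_const m)
  have lower := nuW_comp_iota_le hV hh hZV hZW hL hGh hbdd hGG (hf.sub_const m).neg
  rw [nuW_comp_iota_sub_const hZW hf, gV_sub_const] at upper
  rw [nuW_neg, nuW_comp_iota_sub_const hZW hf, gV_neg, gV_sub_const] at lower
  simp only [neg_sq] at lower
  rw [abs_sub_comm, abs_le']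
  constructor <;> linarith

/-- under Assumption (A), comparison of the interior and boundary means. -/
theorem sticky_mean_comparison
    (d : ℕ) (hd : 1 ≤ d)
    (V : EuclideanSpace ℝ (Fin (d + 1)) → ℝ) (W : EuclideanSpace ℝ (Fin d) → ℝ)
    (hV : ContDiff ℝ 1 V) (hW : Continuous W)
    (hZV : IntegrableOn (fun x => Real.exp (V x)) (Hs d))
    (hZW : Integrable fun y => Real.exp (W y))
    (h : EuclideanSpace ℝ (Fin (d + 1)) → ℝ) (hA : AssumptionA d V W h) :
    ∀ f, IsTest d f →
      |muV d V f - nuW d W (fun y => f (iota d y))| ≤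
        C0 d V W * C1 d V h * Real.sqrt (muV d V (fun x => (f x - muV d V f) ^ 2))
          + C0 d V W * C2 d V h * Real.sqrt (gV d V f) :=
  sticky_mean_comparison_general d V W hV hZV hZW h hA
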